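/- Uniformly over all r,t with 0≤r≤t, the following hold for the region D_tr ⊂ ℝ⁺×ℝ⁺ in (ρ,s) coordinates: (1) if r ≤ t/3, then for every ρ≥0 the one-dimensional Lebesgue measure of the vertical slice {s : (ρ,s)∈D_tr} is at most min{2ρ, 2r, t−r}; and (2) if r ≥ t/3, then for every ρ≥0 the one-dimensional Lebesgue measure of {s : s≥ρ and (ρ,s)∈D_tr} is at most min{2ρ, 2r, t−r}. -/
import Mathlib


noncomputable section

open MeasureTheory Real Set

/-- Euclidean 3-space. -/
abbrev E3 : Type := EuclideanSpace ℝ (Fin 3)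

/-- Space-time functions on ℝ_t × ℝ³. -/
abbrev STFun : Type := ℝ → E3 → ℝ

/-- Time derivative ∂_t. -/
def pt (u : STFun) : STFun := fun t x => deriv (fun s => u s x) t

/-- Spatial derivative ∂_i. -/
def px (i : Fin 3) (u : STFun) : STFun :=
  fun t x => fderiv ℝ (fun y => u t y) x (EuclideanSpace.single i 1)

/-- Space-time derivatives ∂_μ, μ = 0,…,3. -/
def pd : Fin 4 → STFun → STFun := Fin.cons pt (fun i : Fin 3 => px i)

/-- Iterated space-time derivatives ∂^α of order n. -/
def pdsV : (n : ℕ) → (Fin n → Fin 4) → STFun → STFun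
  | 0, _, u => u
  | n+1, α, u => pd (α 0) (pdsV n (fun i => α i.succ) u)

/-- Rotation vector field Ω_{ij} = x^i ∂_j − x^j ∂_i. -/
def rotV (i j : Fin 3) (u : STFun) : STFun :=
  fun t x => x i * px j u t x - x j * px i u t x

/-- Scaling vector field S = t∂_t + x·∇_x. -/
def scalV (u : STFun) : STFun :=
  fun t x => t * pt u t x + ∑ i : Fin 3, x i * px i u t x

/-- The family Z of commuting vector fields: translations, rotations, scaling. -/
inductive VF : Type
  | d : Fin 4 → VF
  | rot : Fin 3 → Fin 3 → VF
  | scal : VF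
deriving DecidableEq, Fintype

/-- Application of a single vector field. -/
def VF.app : VF → STFun → STFun
  | .d μ => pd μ
  | .rot i j => rotV i j
  | .scal => scalV

/-- Z^J for a word of vector fields of length n. -/
def ZopV : (n : ℕ) → (Fin n → VF) → STFun → STFun
  | 0, _, u => u
  | n+1, w, u => (w 0).app (ZopV n (fun i => w i.succ) u)

/-- Z^J for an arbitrary word, as a list. -/
def Zop : List VF → STFun → STFun
  | [], u => u
  | v :: w, u => v.app (Zop w u)

/-- The symbol class S^Z(f): all vector fields of g are pointwise bounded by f. -/
def SZ (g f : STFun) : Prop :=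
  ∀ w : List VF, ∃ C : ℝ, ∀ t x, |Zop w g t x| ≤ C * |f t x|

/-- Japanese bracket ⟨q⟩ = (1+q²)^{1/2}. -/
def jn (q : ℝ) : ℝ := Real.sqrt (1 + q^2)

/-- ⟨r⟩ = (1+|x|²)^{1/2}. -/
def jr (x : E3) : ℝ := jn ‖x‖

/-- Norm of the full space-time gradient |∂u|. -/
def gradNorm (u : STFun) : STFun := fun t x => Real.sqrt (∑ μ : Fin 4, (pd μ u t x)^2)

/-- L² norm over a space-time region. -/
def L2st (Q : Set (ℝ × E3)) (u : STFun) : ℝ :=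
  (∫ p in Q, (u p.1 p.2)^2) ^ (1/2 : ℝ)

/-- Spatial L² norm over ℝ³. -/
def L2sp (u : E3 → ℝ) : ℝ := (∫ x : E3, (u x)^2) ^ (1/2 : ℝ)

/-- Dyadic annuli A_R, R = 2^k (A_{R=1} = {|x|<2}). -/
def ann : ℕ → Set E3
  | 0 => {x | ‖x‖ < 2}
  | k+1 => {x | (2:ℝ)^(k+1) < ‖x‖ ∧ ‖x‖ < 2^(k+2)}

/-- Local energy norm restricted to a space-time region. -/
def LEQ (Q : Set (ℝ × E3)) (u : STFun) : ℝ :=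
  ⨆ k : ℕ, L2st (Q ∩ {p | p.2 ∈ ann k}) (fun t x => jr x ^ (-(1/2) : ℝ) * u t x)

/-- LE¹ norm restricted to a space-time region. -/
def LE1Q (Q : Set (ℝ × E3)) (u : STFun) : ℝ :=
  LEQ Q (gradNorm u) + LEQ Q (fun t x => (jr x)⁻¹ * u t x)

/-- The slab I × ℝ³. -/
def timeSlab (I : Set ℝ) : Set (ℝ × E3) := {p | p.1 ∈ I}

/-- LE norm on a time interval. -/
def LEnorm (I : Set ℝ) (u : STFun) : ℝ := LEQ (timeSlab I) u

/-- LE¹ norm on a time interval. -/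
def LE1norm (I : Set ℝ) (u : STFun) : ℝ := LE1Q (timeSlab I) u

/-- Dual local energy norm LE*. -/
def LEstar (I : Set ℝ) (f : STFun) : ℝ :=
  ∑' k : ℕ, L2st (timeSlab I ∩ {p | p.2 ∈ ann k}) (fun t x => jr x ^ ((1/2) : ℝ) * f t x)

/-- LE^{1,k}: sum over derivatives ∂^α, |α| ≤ k. -/
def LE1k (k : ℕ) (I : Set ℝ) (u : STFun) : ℝ :=
  ∑ j ∈ Finset.range (k+1), ∑ α : Fin j → Fin 4, LE1norm I (pdsV j α u)

/-- LE^{0,k}. -/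
def LE0k (k : ℕ) (I : Set ℝ) (u : STFun) : ℝ :=
  ∑ j ∈ Finset.range (k+1), ∑ α : Fin j → Fin 4, LEnorm I (pdsV j α u)

/-- LE^{*,k}. -/
def LEstark (k : ℕ) (I : Set ℝ) (f : STFun) : ℝ :=
  ∑ j ∈ Finset.range (k+1), ∑ α : Fin j → Fin 4, LEstar I (pdsV j α f)

/-- Iterated spatial derivatives. -/
def pxsV : (n : ℕ) → (Fin n → Fin 3) → (E3 → ℝ) → (E3 → ℝ)
  | 0, _, u => u
  | n+1, α, u => fun x =>
      fderiv ℝ (pxsV n (fun i => α i.succ) u) x (EuclideanSpace.single (α 0) 1)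

/-- Sobolev H^k norm on ℝ³. -/
def Hknorm (k : ℕ) (u : E3 → ℝ) : ℝ :=
  ∑ j ∈ Finset.range (k+1), ∑ α : Fin j → Fin 3, L2sp (pxsV j α u)

/-- ‖∂u(t₀)‖_{H^k}. -/
def HkGrad (k : ℕ) (u : STFun) (t0 : ℝ) : ℝ :=
  ∑ μ : Fin 4, Hknorm k (fun x => pd μ u t0 x)

/-- L²(I;H¹) norm. -/
def L2H1 (I : Set ℝ) (f : STFun) : ℝ :=
  (∫ t in I, (Hknorm 1 (f t))^2) ^ (1/2 : ℝ)

/-- Weak LE¹ norm with cutoff χ. -/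
def LE1w (χ : E3 → ℝ) (I : Set ℝ) (u : STFun) : ℝ :=
  LEnorm I (fun t x => (1 - χ x) * gradNorm u t x) + LEnorm I (fun t x => u t x / jr x)

/-- Weak LE* norm with cutoff χ. -/
def LEstarw (χ : E3 → ℝ) (I : Set ℝ) (f : STFun) : ℝ :=
  LEstar I (fun t x => (1 - χ x) * f t x) + L2H1 I (fun t x => χ x * f t x)

/-- Weak LE^{1,k}_w. -/
def LE1wk (χ : E3 → ℝ) (k : ℕ) (I : Set ℝ) (u : STFun) : ℝ :=
  ∑ j ∈ Finset.range (k+1), ∑ α : Fin j → Fin 4, LE1w χ I (pdsV j α u)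

/-- Weak LE^{*,k}_w. -/
def LEstarwk (χ : E3 → ℝ) (k : ℕ) (I : Set ℝ) (f : STFun) : ℝ :=
  ∑ j ∈ Finset.range (k+1), ∑ α : Fin j → Fin 4, LEstarw χ I (pdsV j α f)

/-- Coefficients of the operator P: inverse metric g^{αβ}, first-order A^μ, potential V. -/
structure Coeffs : Type where
  g : Fin 4 → Fin 4 → STFun
  A : Fin 4 → STFun
  V : STFun

/-- Minkowski metric diag(−1,1,1,1). -/
def minkM : Matrix (Fin 4) (Fin 4) ℝ :=
  Matrix.diagonal (Fin.cons (-1) (fun _ : Fin 3 => 1))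

/-- h := g − m. -/
def hmet (c : Coeffs) (μ ν : Fin 4) : STFun := fun t x => c.g μ ν t x - minkM μ ν

/-- The operator P u = ∂_α(g^{αβ}∂_β u) + ∂_μ(A^μ u) + V u. -/
def Pop (c : Coeffs) (u : STFun) : STFun := fun t x =>
  (∑ μ : Fin 4, ∑ ν : Fin 4, pd μ (fun s y => c.g μ ν s y * pd ν u s y) t x)
  + (∑ μ : Fin 4, pd μ (fun s y => c.A μ s y * u s y) t x)
  + c.V t x * u t x

/-- A symmetric matrix of Lorentzian signature (congruent to Minkowski). -/
def IsLorentzMatrix (G : Matrix (Fin 4) (Fin 4) ℝ) : Prop :=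
  G.IsSymm ∧ ∃ L : Matrix (Fin 4) (Fin 4) ℝ, IsUnit L.det ∧ G = L * minkM * L.transpose

/-- The coefficient matrix g^{αβ}(t,x). -/
def metricMatrix (c : Coeffs) (t : ℝ) (x : E3) : Matrix (Fin 4) (Fin 4) ℝ :=
  Matrix.of fun μ ν => c.g μ ν t x

/-- g is Lorentzian and the slices {t = t₀} are space-like (g^{00} < 0). -/
def LorentzianSpacelike (c : Coeffs) : Prop :=
  ∀ t x, IsLorentzMatrix (metricMatrix c t x) ∧ c.g 0 0 t x < 0

/-- The weight ⟨r⟩^a. -/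
def rpowWeight (a : ℝ) : STFun := fun _ x => jr x ^ a

/-- Coefficient bounds of part (1) of the main theorem. -/
def CoeffBounds1 (c : Coeffs) (σ δ : ℝ) : Prop :=
  (∀ μ ν, SZ (hmet c μ ν) (rpowWeight (-(1+σ)))) ∧
  (∀ μ, SZ (c.A μ) (rpowWeight (-(1+σ)))) ∧
  (∀ μ, SZ (pt (c.A μ)) (rpowWeight (-(2+σ)))) ∧
  SZ c.V (rpowWeight (-(2+δ)))

/-- Additional coefficient bounds of part (2) of the main theorem. -/
def CoeffBounds2 (c : Coeffs) (σ δ : ℝ) : Prop :=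
  (∀ μ ν, SZ (hmet c μ ν) (rpowWeight (-(1+σ)))) ∧
  SZ c.V (rpowWeight (-(2+δ))) ∧
  (∀ μ ν, SZ (pt (hmet c μ ν)) (rpowWeight (-(2+σ)))) ∧
  (∀ μ ν, SZ (pt (pt (hmet c μ ν)))
      (fun t x => (jn (t+‖x‖) * (jn (t-‖x‖))⁻¹ * (jr x)⁻¹)^2 * jr x ^ (-(1+σ)))) ∧
  (∀ μ, SZ (c.A μ) (rpowWeight (-(2+σ)))) ∧
  (∀ μ, SZ (pt (c.A μ))
      (fun t x => jn (t+‖x‖) * (jn (t-‖x‖))⁻¹ * (jr x)⁻¹ * jr x ^ (-(2+σ))))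

/-- The weak local energy decay estimate with a given cutoff. -/
def WeakLEDwith (c : Coeffs) (χ : E3 → ℝ) : Prop :=
  ∀ k : ℕ, ∃ C : ℝ, 0 < C ∧ ∀ ψ : STFun, ∀ T0 : ℝ, 0 ≤ T0 →
    LE1wk χ k (Set.Ici T0) ψ ≤ C * (HkGrad k ψ T0 + LEstarwk χ k (Set.Ici T0) (Pop c ψ))

/-- The weak local energy decay estimate. -/
def WeakLED (c : Coeffs) : Prop :=
  ∃ χ : E3 → ℝ, ContDiff ℝ (⊤ : ℕ∞) χ ∧ HasCompactSupport χ ∧ WeakLEDwith c χ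

/-- The stationary local energy decay estimate. -/
def StatLED (c : Coeffs) : Prop :=
  ∀ k : ℕ, ∃ C : ℝ, 0 < C ∧ ∀ ψ : STFun, ∀ T1 T2 : ℝ, 0 ≤ T1 → T1 ≤ T2 →
    LE1k k (Set.Icc T1 T2) ψ ≤
      C * (HkGrad k ψ T1 + HkGrad k ψ T2 + LEstark k (Set.Icc T1 T2) (Pop c ψ)
           + LE0k k (Set.Icc T1 T2) (pt ψ))

/-- Sum of the quantity F over all vector fields Z^J u, |J| ≤ m. -/
def sumZle (m : ℕ) (F : STFun → ℝ) (u : STFun) : ℝ :=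
  ∑ j ∈ Finset.range (m+1), ∑ w : Fin j → VF, F (ZopV j w u)

/-- Weighted initial-data norm ‖⟨r⟩^γ ∂φ_{≤N}(0)‖_{L²(ℝ³)}. -/
def dataNorm (γ : ℝ) (N : ℕ) (φ : STFun) : ℝ :=
  sumZle N (fun v => L2sp (fun x => jr x ^ γ * gradNorm v 0 x)) φ

/-- Dyadic numbers (powers of 2, at least 1). -/
def Dyadic2 (r : ℝ) : Prop := ∃ k : ℕ, r = 2^k

/-- The slab C_T = {T ≤ t ≤ 2T, r ≤ t}. -/
def CT (T : ℝ) : Set (ℝ × E3) := {p | T ≤ p.1 ∧ p.1 ≤ 2*T ∧ ‖p.2‖ ≤ p.1}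

def shellR (R : ℝ) : Set (ℝ × E3) :=
  {p | if R = 1 then ‖p.2‖ < 2 else R < ‖p.2‖ ∧ ‖p.2‖ < 2*R}

def shellU (U : ℝ) : Set (ℝ × E3) :=
  {p | if U = 1 then p.1 - ‖p.2‖ < 2 else U < p.1 - ‖p.2‖ ∧ p.1 - ‖p.2‖ < 2*U}

/-- Region C^R_T. -/
def CRT (T R : ℝ) : Set (ℝ × E3) := CT T ∩ shellR R

/-- Region C^U_T. -/
def CUT (T U : ℝ) : Set (ℝ × E3) := CT T ∩ shellU U

/-- Slight enlargements. -/
def tCT (T : ℝ) : Set (ℝ × E3) := {p | 3*T/4 ≤ p.1 ∧ p.1 ≤ 9*T/4 ∧ ‖p.2‖ ≤ 9*p.1/8}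

def tshellR (R : ℝ) : Set (ℝ × E3) :=
  {p | if R = 1 then ‖p.2‖ < 3 else 3*R/4 < ‖p.2‖ ∧ ‖p.2‖ < 3*R}

def tshellU (U : ℝ) : Set (ℝ × E3) :=
  {p | if U = 1 then p.1 - ‖p.2‖ < 3 else 3*U/4 < p.1 - ‖p.2‖ ∧ p.1 - ‖p.2‖ < 3*U}

def tCRT (T R : ℝ) : Set (ℝ × E3) := tCT T ∩ tshellR R

def tCUT (T U : ℝ) : Set (ℝ × E3) := tCT T ∩ tshellU U

/-- Exterior region C^R_U. -/
def CRUext (R : ℝ) : Set (ℝ × E3) :=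
  {p | p.1 ≤ ‖p.2‖ ∧ R ≤ ‖p.2‖ ∧ ‖p.2‖ ≤ 2*R ∧ R ≤ ‖p.2‖ - p.1 ∧ ‖p.2‖ - p.1 ≤ 2*R}

def tCRUext (R : ℝ) : Set (ℝ × E3) :=
  {p | p.1 ≤ ‖p.2‖ ∧ 3*R/4 ≤ ‖p.2‖ ∧ ‖p.2‖ ≤ 3*R ∧ 3*R/4 ≤ ‖p.2‖ - p.1 ∧ ‖p.2‖ - p.1 ≤ 3*R}

/-- Exterior region C^T_U. -/
def CTUext (T U : ℝ) : Set (ℝ × E3) :=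
  {p | p.1 ≤ ‖p.2‖ ∧ T ≤ p.1 ∧ p.1 ≤ 2*T ∧
    (if U = 1 then ‖p.2‖ - p.1 < 2 else U < ‖p.2‖ - p.1 ∧ ‖p.2‖ - p.1 < 2*U)}

def tCTUext (T U : ℝ) : Set (ℝ × E3) :=
  {p | p.1 ≤ ‖p.2‖ ∧ 3*T/4 ≤ p.1 ∧ p.1 ≤ 9*T/4 ∧
    (if U = 1 then ‖p.2‖ - p.1 < 3 else 3*U/4 < ‖p.2‖ - p.1 ∧ ‖p.2‖ - p.1 < 3*U)}

/-- Interior region C^{<3T/4}_T = ∪_{R<3T/8} C^R_T. -/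
def CltT (T : ℝ) : Set (ℝ × E3) := ⋃ k : ℕ, ⋃ (_ : (2:ℝ)^k < 3*T/8), CRT T (2^k)

def tCltT (T : ℝ) : Set (ℝ × E3) := ⋃ k : ℕ, ⋃ (_ : (2:ℝ)^k < 3*T/8), tCRT T (2^k)

/-- Iterated scaling S^n. -/
def iterS : ℕ → STFun → STFun
  | 0, u => u
  | n+1, u => scalV (iterS n u)

/-- Iterated rotations Ω^n. -/
def iterRot : (n : ℕ) → (Fin n → Fin 3 × Fin 3) → STFun → STFun
  | 0, _, u => u
  | n+1, ρ, u => rotV (ρ 0).1 (ρ 0).2 (iterRot n (fun i => ρ i.succ) u)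

/-- Σ_{i≤1, j≤2} F(S^i Ω^j w). -/
def sumSO (F : STFun → ℝ) (w : STFun) : ℝ :=
  ∑ i ∈ Finset.range 2, ∑ j ∈ Finset.range 3, ∑ ρ : Fin j → Fin 3 × Fin 3,
    F (iterS i (iterRot j ρ w))

/-- Σ_{k+j≤2} F(S^k Ω^j w). -/
def sumSO2 (F : STFun → ℝ) (w : STFun) : ℝ :=
  ∑ k ∈ Finset.range 3, ∑ j ∈ Finset.range (3-k), ∑ ρ : Fin j → Fin 3 × Fin 3,
    F (iterS k (iterRot j ρ w))

/-- L∞ norm over a space-time region. -/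
def LinfQ (Q : Set (ℝ × E3)) (u : STFun) : ℝ := ⨆ p ∈ Q, |u p.1 p.2|

/-- The region D_{tr} of the one-dimensional reduction, in (ρ,s) coordinates. -/
def Dtr (t r : ℝ) : Set (ℝ × ℝ) :=
  {p | 0 ≤ p.2 - p.1 ∧ p.2 - p.1 ≤ t - r ∧ t - r ≤ p.2 + p.1 ∧ p.2 + p.1 ≤ t + r}

/-- The function κ(λ, q). -/
def kap (lam q : ℝ) : ℝ :=
  if 1 < lam then 1 else if lam = 1 then Real.log (jn q) else (jn q) ^ (1 - lam)


private lemma Dtr_slice_aux (t r ρ : ℝ) :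
    MeasureTheory.volume {s : ℝ | (ρ, s) ∈ Dtr t r} ≤
      ENNReal.ofReal (min (2*ρ) (min (2*r) (t - r))) := by
  have hsub : {s : ℝ | (ρ, s) ∈ Dtr t r} ⊆
      Set.Icc (max ρ (t - r - ρ)) (min (ρ + (t - r)) (t + r - ρ)) := by
    intro s hs
    simp only [Dtr, Set.mem_setOf_eq] at hs
    obtain ⟨h1, h2, h3, h4⟩ := hs
    exact ⟨max_le (by linarith) (by linarith), le_min (by linarith) (by linarith)⟩
  have hlen : min (ρ + (t - r)) (t + r - ρ) - max ρ (t - r - ρ) ≤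
      min (2*ρ) (min (2*r) (t - r)) := by
    have m1 := min_le_left (ρ + (t - r)) (t + r - ρ)
    have m2 := min_le_right (ρ + (t - r)) (t + r - ρ)
    have m3 := le_max_left ρ (t - r - ρ)
    have m4 := le_max_right ρ (t - r - ρ)
    exact le_min (by linarith) (le_min (by linarith) (by linarith))
  refine le_trans (measure_mono hsub) ?_
  rw [Real.volume_Icc]
  exact ENNReal.ofReal_le_ofReal hlen

/-- maximal vertical length within D_{tr}. -/
theorem Dtr_slice_length :
    ∀ t r : ℝ, 0 ≤ r → r ≤ t →
      (r ≤ t/3 → ∀ ρ : ℝ, 0 ≤ ρ →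
        MeasureTheory.volume {s : ℝ | (ρ, s) ∈ Dtr t r} ≤
          ENNReal.ofReal (min (2*ρ) (min (2*r) (t - r)))) ∧
      (t/3 ≤ r → ∀ ρ : ℝ, 0 ≤ ρ →
        MeasureTheory.volume {s : ℝ | ρ ≤ s ∧ (ρ, s) ∈ Dtr t r} ≤
          ENNReal.ofReal (min (2*ρ) (min (2*r) (t - r)))) := by
  intro t r hr hrt
  refine ⟨fun _ ρ _ => Dtr_slice_aux t r ρ, fun _ ρ _ => ?_⟩
  refine le_trans (measure_mono ?_) (Dtr_slice_aux t r ρ)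
  intro s hs
  exact hs.2

end
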